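/- Let I be a finite connected simply-connected poset and let I₀ ∈ I be a minimal element. Then for each connected component K of I \ {I₀}, the subposet K ∩ {J : J ≥ I₀} is connected. -/

import Mathlib

open CategoryTheory

universe v u

/-- A subset of a poset is connected: nonempty, and any two of its elements are
joined by a zigzag of comparabilities within the subset. -/
def ConnIn {α : Type*} [PartialOrder α] (s : Set α) : Prop :=
  s.Nonempty ∧ ∀ x ∈ s, ∀ y ∈ s,
    Relation.ReflTransGen (fun a b => a ∈ s ∧ b ∈ s ∧ (a ≤ b ∨ b ≤ a)) x y

/-- `K` is a connected component of the subset `s` of a poset. -/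
def IsComp {α : Type*} [PartialOrder α] (s K : Set α) : Prop :=
  ∃ x ∈ s, K = {y | y ∈ s ∧
    Relation.ReflTransGen (fun a b => a ∈ s ∧ b ∈ s ∧ (a ≤ b ∨ b ≤ a)) x y}

/-- A category is simply-connected if its fundamental groupoid — the groupoid
freely generated by it, i.e. its localization at all morphisms — has at most
one morphism between any two objects. -/
def SimplyConnectedCat (I : Type u) [Category.{v} I] : Prop :=
  ∀ (X Y : (⊤ : MorphismProperty I).Localization) (f g : X ⟶ Y), f = g

/-!
Fix `x ∈ K ∩ {J | I₀ ≤ J}` and let `c` be its component there. Since `I₀` is minimal and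
membership in `c` is constant along comparabilities strictly above `I₀`, the `ℤ`-valued
cochain that is `1` exactly on the arrows `I₀ ≤ J` with `J ∈ c` is a cocycle, i.e. a functor
`I ⥤ SingleObj (Multiplicative ℤ)`; it factors through the fundamental groupoid. A zigzag from
`x` to `y` inside `K` avoids `I₀`, so the cocycle is trivial along it, while along `x ≥ I₀ ≤ y`
it evaluates to `[y ∈ c] - [x ∈ c]`. Simple connectivity identifies the two paths, so `y ∈ c`.
For nonemptiness: a zigzag from `K` to `I₀` can only leave `K` through `I₀`, and by minimality
the point before it lies above `I₀`.
-/

open Relation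

theorem Relation.ReflTransGen.exists_mem_not_mem {α : Type*} {r : α → α → Prop} {K : Set α}
    {x y : α} (hxy : ReflTransGen r x y) (hx : x ∈ K) (hy : y ∉ K) :
    ∃ a ∈ K, ∃ b ∉ K, r a b := by
  induction hxy with
  | refl => exact absurd hx hy
  | @tail b c _ hbc ih =>
    by_cases hb : b ∈ K
    · exact ⟨b, hb, c, hy, hbc⟩
    · exact ih hb

section Comparability

variable {α : Type*}

def ComparableIn [LE α] (s : Set α) (a b : α) : Prop :=
  a ∈ s ∧ b ∈ s ∧ (a ≤ b ∨ b ≤ a)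

theorem ComparableIn.symm [LE α] {s : Set α} {a b : α} (h : ComparableIn s a b) :
    ComparableIn s b a :=
  ⟨h.2.1, h.1, h.2.2.symm⟩

instance [LE α] (s : Set α) : Std.Symm (ComparableIn s) := ⟨fun _ _ => ComparableIn.symm⟩

namespace IsComp

variable [PartialOrder α] {s K : Set α}

theorem subset (hK : IsComp s K) : K ⊆ s := by
  obtain ⟨x, -, rfl⟩ := hK
  exact fun y hy => hy.1

theorem nonempty (hK : IsComp s K) : K.Nonempty := by
  obtain ⟨x, hx, rfl⟩ := hK
  exact ⟨x, hx, ReflTransGen.refl⟩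

theorem reflTransGen (hK : IsComp s K) {a b : α} (ha : a ∈ K) (hb : b ∈ K) :
    ReflTransGen (ComparableIn s) a b := by
  obtain ⟨x, -, rfl⟩ := hK
  exact (symm (r := ReflTransGen (ComparableIn s)) ha.2).trans hb.2

theorem mem_iff_of_comparableIn (hK : IsComp s K) {a b : α} (hab : ComparableIn s a b) :
    a ∈ K ↔ b ∈ K := by
  obtain ⟨x, -, rfl⟩ := hK
  exact ⟨fun ha => ⟨hab.2.1, ha.2.tail hab⟩, fun hb => ⟨hab.1, hb.2.tail hab.symm⟩⟩

end IsComp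

end Comparability

section Monodromy

variable {α : Type*}

open Classical in
noncomputable def crossingFunctor [PartialOrder α] (I₀ : α) (hI₀ : IsMin I₀) (c : Set α)
    (hc₀ : I₀ ∉ c) (hc : ∀ ⦃b d⦄, I₀ < b → b ≤ d → (b ∈ c ↔ d ∈ c)) :
    α ⥤ SingleObj (Multiplicative ℤ) where
  obj _ := SingleObj.star _
  map {a b} _ := Multiplicative.ofAdd (if a = I₀ ∧ b ∈ c then 1 else 0)
  map_id a := by
    rw [SingleObj.id_as_one, if_neg fun h : a = I₀ ∧ a ∈ c => hc₀ (h.1 ▸ h.2)]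
    rfl
  map_comp {a b d} f g := by
    have hab := leOfHom f
    rw [SingleObj.comp_as_mul, ← ofAdd_add]
    rcases eq_or_ne a I₀ with rfl | ha
    · rcases eq_or_ne b a with rfl | hb
      · simp [hc₀]
      · simp [hb, hc (lt_of_le_of_ne hab hb.symm) (leOfHom g)]
    · have hb : b ≠ I₀ := fun hb => ha (hI₀.eq_of_le (hb ▸ hab))
      simp [ha, hb]

open Classical in
theorem crossingFunctor_map [PartialOrder α] {I₀ : α} (hI₀ : IsMin I₀) {c : Set α}
    (hc₀ : I₀ ∉ c) (hc : ∀ ⦃b d⦄, I₀ < b → b ≤ d → (b ∈ c ↔ d ∈ c)) {a b : α} (f : a ⟶ b) :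
    ((crossingFunctor I₀ hI₀ c hc₀ hc).map f : Multiplicative ℤ) =
      Multiplicative.ofAdd (if a = I₀ ∧ b ∈ c then 1 else 0) :=
  rfl

theorem SimplyConnectedCat.map_homOfLE_eq_of_reflTransGen [Preorder α]
    (hsc : SimplyConnectedCat α) {G : Type*} [Group G] (F : α ⥤ SingleObj G) {S : Set α}
    (hF : ∀ ⦃a b⦄ (h : a ≤ b), a ∈ S → b ∈ S → (F.map (homOfLE h) : G) = (1 : G))
    {x y z : α} (hxy : ReflTransGen (ComparableIn S) x y) (hzx : z ≤ x) (hzy : z ≤ y) :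
    (F.map (homOfLE hzx) : G) = F.map (homOfLE hzy) := by
  let W : MorphismProperty α := ⊤
  let L := Localization.Construction.lift F (W := W) fun _ _ _ _ => inferInstance
  have hL {a b : α} (f : a ⟶ b) : L.map (W.Q.map f) = F.map f := by
    simpa using Functor.congr_hom (Localization.Construction.fac F _) f
  have hQ {a b : α} (f : a ⟶ b) : IsIso (W.Q.map f) := W.Q_inverts f trivial
  obtain ⟨m, hm⟩ : ∃ m : W.Q.obj x ⟶ W.Q.obj y, (L.map m : G) = 1 := by
    clear hzy
    induction hxy with
    | refl => exact ⟨𝟙 _, L.map_id _⟩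
    | @tail b c _ hbc ih =>
      obtain ⟨m, hm⟩ := ih
      rcases hbc.2.2 with h | h
      · refine ⟨m ≫ W.Q.map (homOfLE h), ?_⟩
        rw [L.map_comp, SingleObj.comp_as_mul, hm, hL, hF h hbc.1 hbc.2.1, mul_one]
      · refine ⟨m ≫ inv (W.Q.map (homOfLE h)), ?_⟩
        rw [L.map_comp, L.map_inv, SingleObj.comp_as_mul, SingleObj.inv_as_inv, hm, hL,
          hF h hbc.2.1 hbc.1, inv_one, mul_one]
  have hloop := congrArg L.map (hsc _ _ (inv (W.Q.map (homOfLE hzx)) ≫ W.Q.map (homOfLE hzy)) m)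
  rw [L.map_comp, L.map_inv, SingleObj.comp_as_mul, SingleObj.inv_as_inv, hL, hL, hm] at hloop
  exact (mul_inv_eq_one.mp hloop).symm

end Monodromy

section Components

variable {α : Type*} [PartialOrder α] {I₀ : α} {K : Set α}

theorem IsComp.inter_Ici_nonempty (hconn : ConnIn (Set.univ : Set α)) (hI₀ : IsMin I₀)
    (hK : IsComp (Set.univ \ {I₀}) K) : (K ∩ Set.Ici I₀).Nonempty := by
  obtain ⟨x, hx⟩ := hK.nonempty
  obtain ⟨a, ha, b, hb, -, -, hab⟩ :=
    (hconn.2 x trivial I₀ trivial).exists_mem_not_mem hx fun h => (hK.subset h).2 rfl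
  have haI₀ : a ≠ I₀ := (hK.subset ha).2
  obtain rfl : b = I₀ := by
    by_contra hbI₀
    exact hb ((hK.mem_iff_of_comparableIn ⟨⟨trivial, haI₀⟩, ⟨trivial, hbI₀⟩, hab⟩).1 ha)
  exact ⟨a, ha, hab.resolve_left fun h => haI₀ (hI₀.eq_of_le h)⟩

theorem IsComp.mem_iff_of_lt_of_le {c : Set α} (hc : IsComp (K ∩ Set.Ici I₀) c)
    (hK : IsComp (Set.univ \ {I₀}) K) {b d : α} (hb : I₀ < b) (hbd : b ≤ d) :
    b ∈ c ↔ d ∈ c := by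
  have hd : I₀ < d := hb.trans_le hbd
  have hbdK : b ∈ K ↔ d ∈ K :=
    hK.mem_iff_of_comparableIn ⟨⟨trivial, hb.ne'⟩, ⟨trivial, hd.ne'⟩, Or.inl hbd⟩
  by_cases hbK : b ∈ K
  · exact hc.mem_iff_of_comparableIn ⟨⟨hbK, hb.le⟩, ⟨hbdK.1 hbK, hd.le⟩, Or.inl hbd⟩
  · exact iff_of_false (fun h => hbK (hc.subset h).1) fun h => hbK (hbdK.2 (hc.subset h).1)

end Components

theorem stmt_18_general {α : Type} [PartialOrder α]
    (hconn : ConnIn (Set.univ : Set α))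
    (hsc : SimplyConnectedCat α)
    (I₀ : α) (hmin : ∀ x : α, ¬ x < I₀)
    (K : Set α) (hK : IsComp (Set.univ \ {I₀}) K) :
    ConnIn (K ∩ {J | I₀ ≤ J}) := by
  have hI₀ : IsMin I₀ := isMin_iff_forall_not_lt.2 hmin
  refine ⟨hK.inter_Ici_nonempty hconn hI₀, fun x hx y hy => ?_⟩
  let c := {z | z ∈ K ∩ Set.Ici I₀ ∧ ReflTransGen (ComparableIn (K ∩ Set.Ici I₀)) x z}
  have hc : IsComp (K ∩ Set.Ici I₀) c := ⟨x, hx, rfl⟩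
  have hxc : x ∈ c := ⟨hx, .refl⟩
  have hI₀c : I₀ ∉ c := fun h => (hK.subset (hc.subset h).1).2 rfl
  have hcross := hsc.map_homOfLE_eq_of_reflTransGen
    (crossingFunctor I₀ hI₀ c hI₀c fun _ _ => hc.mem_iff_of_lt_of_le hK)
    (fun a b h ha _ => by rw [crossingFunctor_map, if_neg fun h => ha.2 h.1]; rfl)
    (hK.reflTransGen hx.1 hy.1) hx.2 hy.2
  have hyc : y ∈ c := by simpa [crossingFunctor_map, hxc] using hcross
  exact hyc.2

/-- If `I` is a finite connected simply-connected poset and `I₀ ∈ I` is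
minimal, then for each connected component `K` of `I \ {I₀}`, the subposet
`K ∩ {J | J ≥ I₀}` is connected. -/
theorem stmt_18 {α : Type} [Fintype α] [PartialOrder α]
    (hconn : ConnIn (Set.univ : Set α))
    (hsc : SimplyConnectedCat α)
    (I₀ : α) (hmin : ∀ x : α, ¬ x < I₀)
    (K : Set α) (hK : IsComp (Set.univ \ {I₀}) K) :
    ConnIn (K ∩ {J | I₀ ≤ J}) :=
  stmt_18_general hconn hsc I₀ hmin K hK
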